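/- arXiv:2212.11013 — 2 statements merged into one kernel-verified Lean document; each statement's English description precedes it below -/
import Mathlib

section
/- Let n ≥ 3, let λ₁, …, λₙ be pairwise distinct reals, and let u : ℝⁿ → ℝ be smooth with all uᵢ nowhere zero. Define ω_λ = Σᵢ (∏_{j≠i} (λ - λⱼ)) uᵢ dxⁱ. Then the Frobenius integrability condition dω_λ ∧ ω_λ = 0 for all λ ∈ ℝ is equivalent to the system (λᵢ - λⱼ) uₖ uᵢⱼ + (λₖ - λᵢ) uⱼ uᵢₖ + (λⱼ - λₖ) uᵢ uⱼₖ = 0 for all triples of distinct indices i, j, k ∈ {1, …, n}. -/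
noncomputable def pd {n : ℕ} (i : Fin n) (f : (Fin n → ℝ) → ℝ) (x : Fin n → ℝ) : ℝ :=
  fderiv ℝ f x (Pi.single i 1)

/-- The i-th component of ω_λ = Σᵢ (∏_{j≠i}(λ-λⱼ)) uᵢ dxⁱ. -/
noncomputable def w {n : ℕ} (l : Fin n → ℝ) (u : (Fin n → ℝ) → ℝ) (lam : ℝ) (i : Fin n)
    (x : Fin n → ℝ) : ℝ :=
  (∏ j ∈ Finset.univ.erase i, (lam - l j)) * pd i u x

lemma pd_contDiff {n : ℕ} {u : (Fin n → ℝ) → ℝ} (hu : ContDiff ℝ (⊤ : ℕ∞) u) (j : Fin n) :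
    ContDiff ℝ (⊤ : ℕ∞) (pd j u) := by
  have h := hu.fderiv_right (m := (⊤ : ℕ∞)) (by simp)
  exact h.clm_apply contDiff_const

lemma pd_w {n : ℕ} {u : (Fin n → ℝ) → ℝ} (hu : ContDiff ℝ (⊤ : ℕ∞) u) (l : Fin n → ℝ) (lam : ℝ)
    (i j : Fin n) (x : Fin n → ℝ) :
    pd i (w l u lam j) x
      = (∏ m ∈ Finset.univ.erase j, (lam - l m)) * pd i (pd j u) x := by
  have hd : DifferentiableAt ℝ (pd j u) x :=
    ((pd_contDiff hu j).differentiable (by simp)) x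
  show fderiv ℝ (fun y => (∏ m ∈ Finset.univ.erase j, (lam - l m)) * pd j u y) x
      (Pi.single i 1) = _
  rw [fderiv_const_mul hd]
  simp [pd]

lemma pd_symm {n : ℕ} {u : (Fin n → ℝ) → ℝ} (hu : ContDiff ℝ (⊤ : ℕ∞) u) (i j : Fin n)
    (x : Fin n → ℝ) : pd i (pd j u) x = pd j (pd i u) x := by
  have hd : Differentiable ℝ u := hu.differentiable (by simp)
  have hfd : DifferentiableAt ℝ (fderiv ℝ u) x :=
    ((hu.fderiv_right (m := (⊤ : ℕ∞)) (by simp)).differentiable (by simp)) x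
  have h1 : ∀ a b : Fin n, pd a (pd b u) x
      = fderiv ℝ (fderiv ℝ u) x (Pi.single a 1) (Pi.single b 1) := by
    intro a b
    have hb : pd b u = fun y => (fderiv ℝ u y) (Pi.single b 1) := rfl
    show fderiv ℝ (pd b u) x (Pi.single a 1) = _
    rw [hb, fderiv_clm_apply hfd (differentiableAt_const _)]
    simp
  rw [h1, h1]
  exact second_derivative_symmetric (fun y => (hd y).hasFDerivAt) hfd.hasFDerivAt _ _

lemma erase_eq_insert {n : ℕ} {i j k : Fin n} (hij : i ≠ j) (hik : i ≠ k) (hjk : j ≠ k) :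
    Finset.univ.erase i = insert j (insert k (Finset.univ \ {i, j, k})) := by
  ext m
  simp only [Finset.mem_erase, Finset.mem_univ, and_true, Finset.mem_insert, Finset.mem_sdiff,
    Finset.mem_singleton]
  constructor
  · intro h
    by_cases h1 : m = j
    · exact Or.inl h1
    by_cases h2 : m = k
    · exact Or.inr (Or.inl h2)
    exact Or.inr (Or.inr ⟨trivial, by tauto⟩)
  · rintro (rfl | rfl | ⟨-, h⟩) <;> tauto

lemma prod_erase_eq {n : ℕ} (l : Fin n → ℝ) (lam : ℝ) {i j k : Fin n}
    (hij : i ≠ j) (hik : i ≠ k) (hjk : j ≠ k) :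
    ∏ m ∈ Finset.univ.erase i, (lam - l m)
      = (lam - l j) * ((lam - l k) * ∏ m ∈ Finset.univ \ {i, j, k}, (lam - l m)) := by
  rw [erase_eq_insert hij hik hjk, Finset.prod_insert, Finset.prod_insert]
  · simp [Finset.mem_sdiff]
  · simp only [Finset.mem_insert, Finset.mem_sdiff, Finset.mem_singleton]
    push_neg
    exact ⟨hjk, fun _ => by tauto⟩

lemma key {n : ℕ} (l : Fin n → ℝ) (lam : ℝ) {i j k : Fin n}
    (hij : i ≠ j) (hik : i ≠ k) (hjk : j ≠ k) :
    ((∏ m ∈ Finset.univ.erase j, (lam - l m)) - ∏ m ∈ Finset.univ.erase i, (lam - l m)) *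
        ∏ m ∈ Finset.univ.erase k, (lam - l m)
      = (l j - l i) * ((lam - l i) * (lam - l j) * (lam - l k) *
          (∏ m ∈ Finset.univ \ {i, j, k}, (lam - l m)) ^ 2) := by
  have sji : ({j, i, k} : Finset (Fin n)) = {i, j, k} := by
    ext m; simp only [Finset.mem_insert, Finset.mem_singleton]; tauto
  have ski : ({k, i, j} : Finset (Fin n)) = {i, j, k} := by
    ext m; simp only [Finset.mem_insert, Finset.mem_singleton]; tauto
  have h1 := prod_erase_eq l lam hij hik hjk
  have h2 := prod_erase_eq l lam hij.symm hjk hik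
  have h3 := prod_erase_eq l lam hik.symm hjk.symm hij
  rw [sji] at h2
  rw [ski] at h3
  rw [h1, h2, h3]
  ring

theorem stmt3 (n : ℕ) (hn : 3 ≤ n) (l : Fin n → ℝ) (hl : Function.Injective l)
    (u : (Fin n → ℝ) → ℝ) (hu : ContDiff ℝ (⊤ : ℕ∞) u) (hui : ∀ i x, pd i u x ≠ 0) :
    (∀ (lam : ℝ) (x : Fin n → ℝ), ∀ i j k : Fin n,
        (pd i (w l u lam j) x - pd j (w l u lam i) x) * w l u lam k x
      + (pd j (w l u lam k) x - pd k (w l u lam j) x) * w l u lam i x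
      + (pd k (w l u lam i) x - pd i (w l u lam k) x) * w l u lam j x = 0)
    ↔ (∀ (x : Fin n → ℝ), ∀ i j k : Fin n, i ≠ j → j ≠ k → i ≠ k →
        (l i - l j) * pd k u x * pd i (pd j u) x
      + (l k - l i) * pd j u x * pd i (pd k u) x
      + (l j - l k) * pd i u x * pd j (pd k u) x = 0) := by
  constructor
  · intro h x i j k hij hjk hik
    obtain ⟨lam, hlam⟩ := (Set.finite_range l).infinite_compl.nonempty
    have hne : ∀ m : Fin n, lam - l m ≠ 0 := by
      intro m hm
      exact hlam ⟨m, by linarith [sub_eq_zero.1 hm]⟩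
    have hS : (lam - l i) * (lam - l j) * (lam - l k) *
        (∏ m ∈ Finset.univ \ {i, j, k}, (lam - l m)) ^ 2 ≠ 0 := by
      apply mul_ne_zero (mul_ne_zero (mul_ne_zero (hne i) (hne j)) (hne k))
      exact pow_ne_zero _ (Finset.prod_ne_zero_iff.2 fun m _ => hne m)
    have hh := h lam x i j k
    rw [pd_w hu l lam i j, pd_w hu l lam j i, pd_w hu l lam j k, pd_w hu l lam k j,
      pd_w hu l lam k i, pd_w hu l lam i k, ← pd_symm hu i j x, ← pd_symm hu j k x,
      ← pd_symm hu i k x] at hh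
    simp only [w] at hh
    have e1 := key l lam hij hik hjk
    have e2 := key l lam hjk hij.symm hik.symm
    have e3 := key l lam hik.symm hjk.symm hij
    have sjki : ({j, k, i} : Finset (Fin n)) = {i, j, k} := by
      ext m; simp only [Finset.mem_insert, Finset.mem_singleton]; tauto
    have skij : ({k, i, j} : Finset (Fin n)) = {i, j, k} := by
      ext m; simp only [Finset.mem_insert, Finset.mem_singleton]; tauto
    rw [sjki] at e2
    rw [skij] at e3
    have hST : ((lam - l i) * (lam - l j) * (lam - l k) *
        (∏ m ∈ Finset.univ \ {i, j, k}, (lam - l m)) ^ 2) *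
        ((l i - l j) * pd k u x * pd i (pd j u) x
        + (l k - l i) * pd j u x * pd i (pd k u) x
        + (l j - l k) * pd i u x * pd j (pd k u) x) = 0 := by
      linear_combination (-1 : ℝ) * hh + pd i (pd j u) x * pd k u x * e1
        + pd j (pd k u) x * pd i u x * e2 + pd i (pd k u) x * pd j u x * e3
    exact (mul_eq_zero.1 hST).resolve_left hS
  · intro h lam x i j k
    by_cases hij : i = j
    · subst hij; ring
    by_cases hjk : j = k
    · subst hjk; ring
    by_cases hik : i = k
    · subst hik; ring
    rw [pd_w hu l lam i j, pd_w hu l lam j i, pd_w hu l lam j k, pd_w hu l lam k j,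
      pd_w hu l lam k i, pd_w hu l lam i k, ← pd_symm hu i j x, ← pd_symm hu j k x,
      ← pd_symm hu i k x]
    simp only [w]
    have e1 := key l lam hij hik hjk
    have e2 := key l lam hjk (Ne.symm hij) (Ne.symm hik)
    have e3 := key l lam (Ne.symm hik) (Ne.symm hjk) hij
    have sjki : ({j, k, i} : Finset (Fin n)) = {i, j, k} := by
      ext m; simp only [Finset.mem_insert, Finset.mem_singleton]; tauto
    have skij : ({k, i, j} : Finset (Fin n)) = {i, j, k} := by
      ext m; simp only [Finset.mem_insert, Finset.mem_singleton]; tauto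
    rw [sjki] at e2
    rw [skij] at e3
    have hT := h x i j k hij hjk hik
    linear_combination pd i (pd j u) x * pd k u x * e1
      + pd j (pd k u) x * pd i u x * e2 + pd i (pd k u) x * pd j u x * e3
      - ((lam - l i) * (lam - l j) * (lam - l k) *
          (∏ m ∈ Finset.univ \ {i, j, k}, (lam - l m)) ^ 2) * hT
end

section
/- Let λ₁, λ₂, λ₃, λ₄ be pairwise distinct reals and u : ℝ⁴ → ℝ smooth with all second mixed partials uᵢⱼ (i≠j) nowhere zero. Define for λ ∈ ℝ: L₀ = (λ-λ₁)(λ₂-λ₃)u₂₃∂₁ + (λ-λ₂)(λ₃-λ₁)u₁₃∂₂ + (λ-λ₃)(λ₁-λ₂)u₁₂∂₃ and L₁ = (λ-λ₁)(λ₂-λ₄)u₂₄∂₁ + (λ-λ₂)(λ₄-λ₁)u₁₄∂₂ + (λ-λ₄)(λ₁-λ₂)u₁₂∂₄. If u satisfies the general heavenly equation (λ₁-λ₂)(λ₃-λ₄)u₁₂u₃₄ + (λ₂-λ₃)(λ₁-λ₄)u₂₃u₁₄ + (λ₃-λ₁)(λ₂-λ₄)u₃₁u₂₄ = 0 (together with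 its differential consequences obtained by differentiating in each variable), then [L₀, L₁] lies pointwise in the span of L₀ and L₁ for every λ. -/
noncomputable def br {n : ℕ} (X Y : (Fin n → ℝ) → (Fin n → ℝ)) (x : Fin n → ℝ) : Fin n → ℝ :=
  fun k => ∑ j, (X x j * pd j (fun y => Y y k) x - Y x j * pd j (fun y => X y k) x)

noncomputable def L0 (u : (Fin 4 → ℝ) → ℝ) (l1 l2 l3 lam : ℝ) :
    (Fin 4 → ℝ) → (Fin 4 → ℝ) :=
  fun x => ![(lam - l1) * (l2 - l3) * pd 1 (pd 2 u) x,
             (lam - l2) * (l3 - l1) * pd 0 (pd 2 u) x,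
             (lam - l3) * (l1 - l2) * pd 0 (pd 1 u) x, 0]

noncomputable def L1 (u : (Fin 4 → ℝ) → ℝ) (l1 l2 l4 lam : ℝ) :
    (Fin 4 → ℝ) → (Fin 4 → ℝ) :=
  fun x => ![(lam - l1) * (l2 - l4) * pd 1 (pd 3 u) x,
             (lam - l2) * (l4 - l1) * pd 0 (pd 3 u) x, 0,
             (lam - l4) * (l1 - l2) * pd 0 (pd 1 u) x]

lemma pd_contDiff_s5 {n : ℕ} {f : (Fin n → ℝ) → ℝ} (hf : ContDiff ℝ (⊤ : ℕ∞) f) (i : Fin n) :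
    ContDiff ℝ (⊤ : ℕ∞) (pd i f) := by
  have h : pd i f = fun x =>
      (ContinuousLinearMap.apply ℝ ℝ (Pi.single i 1 : Fin n → ℝ)) (fderiv ℝ f x) := rfl
  rw [h]
  exact (ContinuousLinearMap.apply ℝ ℝ _).contDiff.comp (hf.fderiv_right (m := (⊤ : ℕ∞)) (by simp))

lemma pd_comm {n : ℕ} {f : (Fin n → ℝ) → ℝ} (hf : ContDiff ℝ (⊤ : ℕ∞) f) (i j : Fin n)
    (x : Fin n → ℝ) : pd i (pd j f) x = pd j (pd i f) x := by
  have hsym : IsSymmSndFDerivAt ℝ f x :=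
    (hf.contDiffAt).isSymmSndFDerivAt (by rw [minSmoothness_of_isRCLikeNormedField]; exact WithTop.coe_le_coe.mpr le_top)
  have hdf : DifferentiableAt ℝ (fderiv ℝ f) x :=
    ((hf.fderiv_right (m := (⊤ : ℕ∞)) (by simp)).differentiable (by simp)).differentiableAt
  have h2 : ∀ v w : Fin n → ℝ, fderiv ℝ (fun y => fderiv ℝ f y v) x w
      = fderiv ℝ (fderiv ℝ f) x w v := by
    intro v w
    have h3 : fderiv ℝ (fun y => (ContinuousLinearMap.apply ℝ ℝ v) (fderiv ℝ f y)) x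
        = (ContinuousLinearMap.apply ℝ ℝ v).comp (fderiv ℝ (fderiv ℝ f) x) :=
      ((ContinuousLinearMap.apply ℝ ℝ v).hasFDerivAt.comp x hdf.hasFDerivAt).fderiv
    have h1 : (fun y => fderiv ℝ f y v) = fun y =>
        (ContinuousLinearMap.apply ℝ ℝ v) (fderiv ℝ f y) := rfl
    rw [h1, h3]; rfl
  show fderiv ℝ (fun y => fderiv ℝ f y (Pi.single j 1)) x (Pi.single i 1)
      = fderiv ℝ (fun y => fderiv ℝ f y (Pi.single i 1)) x (Pi.single j 1)
  rw [h2, h2]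
  exact hsym _ _

lemma pd_const_mul {n : ℕ} {f : (Fin n → ℝ) → ℝ} {x : Fin n → ℝ}
    (hf : DifferentiableAt ℝ f x) (c : ℝ) (j : Fin n) :
    pd j (fun y => c * f y) x = c * pd j f x := by
  unfold pd; rw [fderiv_const_mul hf c]; rfl

lemma pd_const {n : ℕ} (c : ℝ) (j : Fin n) (x : Fin n → ℝ) :
    pd j (fun _ => c) x = 0 := by
  unfold pd; rw [fderiv_fun_const]; rfl

lemma pd_heav {n : ℕ} (k : Fin n) (y : Fin n → ℝ) (c1 c2 c3 : ℝ)
    (f1 g1 f2 g2 f3 g3 : (Fin n → ℝ) → ℝ)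
    (hf1 : DifferentiableAt ℝ f1 y) (hg1 : DifferentiableAt ℝ g1 y)
    (hf2 : DifferentiableAt ℝ f2 y) (hg2 : DifferentiableAt ℝ g2 y)
    (hf3 : DifferentiableAt ℝ f3 y) (hg3 : DifferentiableAt ℝ g3 y) :
    pd k (fun z => c1 * f1 z * g1 z + c2 * f2 z * g2 z + c3 * f3 z * g3 z) y
      = c1 * (pd k f1 y * g1 y + f1 y * pd k g1 y)
      + c2 * (pd k f2 y * g2 y + f2 y * pd k g2 y)
      + c3 * (pd k f3 y * g3 y + f3 y * pd k g3 y) := by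
  have H1 := ((hf1.hasFDerivAt.const_mul c1).mul hg1.hasFDerivAt)
  have H2 := ((hf2.hasFDerivAt.const_mul c2).mul hg2.hasFDerivAt)
  have H3 := ((hf3.hasFDerivAt.const_mul c3).mul hg3.hasFDerivAt)
  have H := ((H1.add H2).add H3).fderiv
  unfold pd
  rw [show (fun z => c1 * f1 z * g1 z + c2 * f2 z * g2 z + c3 * f3 z * g3 z) = (fun y => c1 * f1 y) * g1 + (fun y => c2 * f2 y) * g2 + (fun y => c3 * f3 y) * g3 from rfl, H]
  simp only [ContinuousLinearMap.add_apply, ContinuousLinearMap.smul_apply, smul_eq_mul]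
  ring

theorem stmt5 (l1 l2 l3 l4 : ℝ)
    (hd : l1 ≠ l2 ∧ l1 ≠ l3 ∧ l1 ≠ l4 ∧ l2 ≠ l3 ∧ l2 ≠ l4 ∧ l3 ≠ l4)
    (u : (Fin 4 → ℝ) → ℝ) (hu : ContDiff ℝ (⊤ : ℕ∞) u)
    (hnz : ∀ i j : Fin 4, i ≠ j → ∀ x, pd i (pd j u) x ≠ 0)
    (heq : ∀ x : Fin 4 → ℝ,
        (l1 - l2) * (l3 - l4) * pd 0 (pd 1 u) x * pd 2 (pd 3 u) x
      + (l2 - l3) * (l1 - l4) * pd 1 (pd 2 u) x * pd 0 (pd 3 u) x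
      + (l3 - l1) * (l2 - l4) * pd 2 (pd 0 u) x * pd 1 (pd 3 u) x = 0) :
    ∀ (lam : ℝ) (x : Fin 4 → ℝ), ∃ α β : ℝ,
      br (L0 u l1 l2 l3 lam) (L1 u l1 l2 l4 lam) x
        = α • L0 u l1 l2 l3 lam x + β • L1 u l1 l2 l4 lam x := by
  intro lam x
  have hu1 : ∀ i : Fin 4, ContDiff ℝ (⊤ : ℕ∞) (pd i u) := fun i => pd_contDiff_s5 hu i
  have hu2 : ∀ i j : Fin 4, ContDiff ℝ (⊤ : ℕ∞) (pd i (pd j u)) := fun i j => pd_contDiff_s5 (hu1 j) i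
  have d2 : ∀ (i j : Fin 4) (y : Fin 4 → ℝ), DifferentiableAt ℝ (pd i (pd j u)) y :=
    fun i j y => ((hu2 i j).differentiable (by simp)).differentiableAt
  -- symmetry facts
  have sw2 : ∀ i j : Fin 4, pd i (pd j u) = pd j (pd i u) :=
    fun i j => funext (pd_comm hu i j)
  have swo : ∀ (i j k : Fin 4) (y : Fin 4 → ℝ),
      pd i (pd j (pd k u)) y = pd j (pd i (pd k u)) y :=
    fun i j k y => pd_comm (hu1 k) i j y
  have swi : ∀ (a j b : Fin 4) (y : Fin 4 → ℝ),
      pd a (pd j (pd b u)) y = pd a (pd b (pd j u)) y :=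
    fun a j b y => congrFun (congrArg (pd a) (sw2 j b)) y
  -- normalized heavenly equation
  have heq' : ∀ z : Fin 4 → ℝ,
        (l1 - l2) * (l3 - l4) * pd 0 (pd 1 u) z * pd 2 (pd 3 u) z
      + (l2 - l3) * (l1 - l4) * pd 1 (pd 2 u) z * pd 0 (pd 3 u) z
      + (l3 - l1) * (l2 - l4) * pd 0 (pd 2 u) z * pd 1 (pd 3 u) z = 0 := by
    intro z
    have h := heq z
    rw [sw2 2 0] at h
    exact h
  -- derivatives of the heavenly equation
  have hdE : ∀ (k : Fin 4) (y : Fin 4 → ℝ),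
        (l1 - l2) * (l3 - l4) *
          (pd k (pd 0 (pd 1 u)) y * pd 2 (pd 3 u) y + pd 0 (pd 1 u) y * pd k (pd 2 (pd 3 u)) y)
      + (l2 - l3) * (l1 - l4) *
          (pd k (pd 1 (pd 2 u)) y * pd 0 (pd 3 u) y + pd 1 (pd 2 u) y * pd k (pd 0 (pd 3 u)) y)
      + (l3 - l1) * (l2 - l4) *
          (pd k (pd 0 (pd 2 u)) y * pd 1 (pd 3 u) y + pd 0 (pd 2 u) y * pd k (pd 1 (pd 3 u)) y)
      = 0 := by
    intro k y
    have e := pd_heav k y ((l1 - l2) * (l3 - l4)) ((l2 - l3) * (l1 - l4)) ((l3 - l1) * (l2 - l4))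
      (pd 0 (pd 1 u)) (pd 2 (pd 3 u)) (pd 1 (pd 2 u)) (pd 0 (pd 3 u))
      (pd 0 (pd 2 u)) (pd 1 (pd 3 u))
      (d2 0 1 y) (d2 2 3 y) (d2 1 2 y) (d2 0 3 y) (d2 0 2 y) (d2 1 3 y)
    have hz : (fun z => (l1 - l2) * (l3 - l4) * pd 0 (pd 1 u) z * pd 2 (pd 3 u) z
      + (l2 - l3) * (l1 - l4) * pd 1 (pd 2 u) z * pd 0 (pd 3 u) z
      + (l3 - l1) * (l2 - l4) * pd 0 (pd 2 u) z * pd 1 (pd 3 u) z) = fun _ => (0:ℝ) :=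
      funext heq'
    rw [hz, pd_const] at e
    linarith [e]
  -- component reductions of L0 and L1
  have e00 : (fun y => L0 u l1 l2 l3 lam y 0)
      = fun y => ((lam - l1) * (l2 - l3)) * pd 1 (pd 2 u) y := by
    funext y; simp [L0]
  have e01 : (fun y => L0 u l1 l2 l3 lam y 1)
      = fun y => ((lam - l2) * (l3 - l1)) * pd 0 (pd 2 u) y := by
    funext y; simp [L0]
  have e02 : (fun y => L0 u l1 l2 l3 lam y 2)
      = fun y => ((lam - l3) * (l1 - l2)) * pd 0 (pd 1 u) y := by
    funext y; simp [L0]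
  have e03 : (fun y => L0 u l1 l2 l3 lam y 3) = fun _ => (0:ℝ) := by
    funext y; simp [L0]
  have e10 : (fun y => L1 u l1 l2 l4 lam y 0)
      = fun y => ((lam - l1) * (l2 - l4)) * pd 1 (pd 3 u) y := by
    funext y; simp [L1]
  have e11 : (fun y => L1 u l1 l2 l4 lam y 1)
      = fun y => ((lam - l2) * (l4 - l1)) * pd 0 (pd 3 u) y := by
    funext y; simp [L1]
  have e12 : (fun y => L1 u l1 l2 l4 lam y 2) = fun _ => (0:ℝ) := by
    funext y; simp [L1]
  have e13 : (fun y => L1 u l1 l2 l4 lam y 3)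
      = fun y => ((lam - l4) * (l1 - l2)) * pd 0 (pd 1 u) y := by
    funext y; simp [L1]
  have q00 : ∀ j : Fin 4, pd j (fun y => L0 u l1 l2 l3 lam y 0) x
      = ((lam - l1) * (l2 - l3)) * pd j (pd 1 (pd 2 u)) x :=
    fun j => by rw [e00]; exact pd_const_mul (d2 1 2 x) _ j
  have q01 : ∀ j : Fin 4, pd j (fun y => L0 u l1 l2 l3 lam y 1) x
      = ((lam - l2) * (l3 - l1)) * pd j (pd 0 (pd 2 u)) x :=
    fun j => by rw [e01]; exact pd_const_mul (d2 0 2 x) _ j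
  have q02 : ∀ j : Fin 4, pd j (fun y => L0 u l1 l2 l3 lam y 2) x
      = ((lam - l3) * (l1 - l2)) * pd j (pd 0 (pd 1 u)) x :=
    fun j => by rw [e02]; exact pd_const_mul (d2 0 1 x) _ j
  have q03 : ∀ j : Fin 4, pd j (fun y => L0 u l1 l2 l3 lam y 3) x = 0 :=
    fun j => by rw [e03]; exact pd_const 0 j x
  have q10 : ∀ j : Fin 4, pd j (fun y => L1 u l1 l2 l4 lam y 0) x
      = ((lam - l1) * (l2 - l4)) * pd j (pd 1 (pd 3 u)) x :=
    fun j => by rw [e10]; exact pd_const_mul (d2 1 3 x) _ j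
  have q11 : ∀ j : Fin 4, pd j (fun y => L1 u l1 l2 l4 lam y 1) x
      = ((lam - l2) * (l4 - l1)) * pd j (pd 0 (pd 3 u)) x :=
    fun j => by rw [e11]; exact pd_const_mul (d2 0 3 x) _ j
  have q12 : ∀ j : Fin 4, pd j (fun y => L1 u l1 l2 l4 lam y 2) x = 0 :=
    fun j => by rw [e12]; exact pd_const 0 j x
  have q13 : ∀ j : Fin 4, pd j (fun y => L1 u l1 l2 l4 lam y 3) x
      = ((lam - l4) * (l1 - l2)) * pd j (pd 0 (pd 1 u)) x :=
    fun j => by rw [e13]; exact pd_const_mul (d2 0 1 x) _ j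
  have hp01 : pd 0 (pd 1 u) x ≠ 0 := hnz 0 1 (by decide) x
  set A : ℝ := (-(((lam - l1) * (l2 - l4)) * pd 1 (pd 3 u) x * pd 0 (pd 0 (pd 1 u)) x
          + ((lam - l2) * (l4 - l1)) * pd 0 (pd 3 u) x * pd 0 (pd 1 (pd 1 u)) x
          + ((lam - l4) * (l1 - l2)) * pd 0 (pd 1 u) x * pd 0 (pd 1 (pd 3 u)) x))
            / pd 0 (pd 1 u) x with hA
  set B : ℝ := (((lam - l1) * (l2 - l3)) * pd 1 (pd 2 u) x * pd 0 (pd 0 (pd 1 u)) x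
          + ((lam - l2) * (l3 - l1)) * pd 0 (pd 2 u) x * pd 0 (pd 1 (pd 1 u)) x
          + ((lam - l3) * (l1 - l2)) * pd 0 (pd 1 u) x * pd 0 (pd 1 (pd 2 u)) x)
            / pd 0 (pd 1 u) x with hB
  refine ⟨A, B, ?_⟩
  have hd0 := hdE 0 x
  have hd1 := hdE 1 x
  rw [swo 1 0 1 x, swo 1 0 3 x, swo 1 0 2 x] at hd1
  have hcomp : ∀ m : Fin 4, br (L0 u l1 l2 l3 lam) (L1 u l1 l2 l4 lam) x m
      = A * L0 u l1 l2 l3 lam x m + B * L1 u l1 l2 l4 lam x m := by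
    intro m
    fin_cases m
    · show br (L0 u l1 l2 l3 lam) (L1 u l1 l2 l4 lam) x 0
        = A * L0 u l1 l2 l3 lam x 0 + B * L1 u l1 l2 l4 lam x 0
      simp only [br, Fin.sum_univ_four]
      simp only [q00, q01, q02, q03, q10, q11, q12, q13]
      simp only [L0, L1, Matrix.cons_val_zero, Matrix.cons_val_one, Matrix.head_cons,
        Matrix.cons_val_two, Matrix.tail_cons, Matrix.cons_val_three,
        mul_zero, zero_mul, sub_zero, zero_sub, add_zero, zero_add, neg_zero]
      rw [show pd 2 (pd 1 (pd 3 u)) x = pd 1 (pd 2 (pd 3 u)) x from swo 2 1 3 x,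
          show pd 3 (pd 1 (pd 2 u)) x = pd 1 (pd 2 (pd 3 u)) x from
            (swo 3 1 2 x).trans (swi 1 3 2 x)]
      rw [hA, hB, div_mul_eq_mul_div, div_mul_eq_mul_div, ← add_div, eq_div_iff hp01]
      linear_combination ((lam - l1) * (lam - l2) * pd 0 (pd 1 u) x) * hd1
        - ((lam - l1) * (lam - l2) * pd 0 (pd 1 (pd 1 u)) x) * heq' x
    · show br (L0 u l1 l2 l3 lam) (L1 u l1 l2 l4 lam) x 1
        = A * L0 u l1 l2 l3 lam x 1 + B * L1 u l1 l2 l4 lam x 1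
      simp only [br, Fin.sum_univ_four]
      simp only [q00, q01, q02, q03, q10, q11, q12, q13]
      simp only [L0, L1, Matrix.cons_val_zero, Matrix.cons_val_one, Matrix.head_cons,
        Matrix.cons_val_two, Matrix.tail_cons, Matrix.cons_val_three,
        mul_zero, zero_mul, sub_zero, zero_sub, add_zero, zero_add, neg_zero]
      rw [show pd 2 (pd 0 (pd 3 u)) x = pd 0 (pd 2 (pd 3 u)) x from swo 2 0 3 x,
          show pd 1 (pd 0 (pd 3 u)) x = pd 0 (pd 1 (pd 3 u)) x from swo 1 0 3 x,
          show pd 1 (pd 0 (pd 2 u)) x = pd 0 (pd 1 (pd 2 u)) x from swo 1 0 2 x,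
          show pd 3 (pd 0 (pd 2 u)) x = pd 0 (pd 2 (pd 3 u)) x from
            (swo 3 0 2 x).trans (swi 0 3 2 x)]
      rw [hA, hB, div_mul_eq_mul_div, div_mul_eq_mul_div, ← add_div, eq_div_iff hp01]
      linear_combination (-((lam - l1) * (lam - l2) * pd 0 (pd 1 u) x)) * hd0
        + ((lam - l1) * (lam - l2) * pd 0 (pd 0 (pd 1 u)) x) * heq' x
    · show br (L0 u l1 l2 l3 lam) (L1 u l1 l2 l4 lam) x 2
        = A * L0 u l1 l2 l3 lam x 2 + B * L1 u l1 l2 l4 lam x 2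
      simp only [br, Fin.sum_univ_four]
      simp only [q00, q01, q02, q03, q10, q11, q12, q13]
      simp only [L0, L1, Matrix.cons_val_zero, Matrix.cons_val_one, Matrix.head_cons,
        Matrix.cons_val_two, Matrix.tail_cons, Matrix.cons_val_three,
        mul_zero, zero_mul, sub_zero, zero_sub, add_zero, zero_add, neg_zero]
      rw [show pd 1 (pd 0 (pd 1 u)) x = pd 0 (pd 1 (pd 1 u)) x from swo 1 0 1 x,
          show pd 3 (pd 0 (pd 1 u)) x = pd 0 (pd 1 (pd 3 u)) x from
            (swo 3 0 1 x).trans (swi 0 3 1 x)]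
      rw [hA, div_mul_eq_mul_div, eq_div_iff hp01]
      ring
    · show br (L0 u l1 l2 l3 lam) (L1 u l1 l2 l4 lam) x 3
        = A * L0 u l1 l2 l3 lam x 3 + B * L1 u l1 l2 l4 lam x 3
      simp only [br, Fin.sum_univ_four]
      simp only [q00, q01, q02, q03, q10, q11, q12, q13]
      simp only [L0, L1, Matrix.cons_val_zero, Matrix.cons_val_one, Matrix.head_cons,
        Matrix.cons_val_two, Matrix.tail_cons, Matrix.cons_val_three,
        mul_zero, zero_mul, sub_zero, zero_sub, add_zero, zero_add, neg_zero]
      rw [show pd 1 (pd 0 (pd 1 u)) x = pd 0 (pd 1 (pd 1 u)) x from swo 1 0 1 x,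
          show pd 2 (pd 0 (pd 1 u)) x = pd 0 (pd 1 (pd 2 u)) x from
            (swo 2 0 1 x).trans (swi 0 2 1 x)]
      rw [hB, div_mul_eq_mul_div, eq_div_iff hp01]
      ring
  funext k
  simp only [Pi.add_apply, Pi.smul_apply, smul_eq_mul]
  exact hcomp k
end
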